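/- arXiv:2401.03487 — 6 statements merged into one kernel-verified Lean document; each statement's English description precedes it below -/
import Mathlib

section
/- Let p be a positive matrix semigroup over a countable index set I, and suppose j ∈ I satisfies p_{jj}(t) = 0 for all t > 0. Then for every t > 0, every i, k ∈ I, every sequence (α_n) of positive reals, and every N ∈ ℕ: p_{ik}(t + Σ_{n=1}^N α_n) = Σ_{n=1}^N p_{ij}(t + Σ_{m=1}^{n-1} α_m) · p_{jk}(Σ_{m=n}^N α_m) + Σ_{k₁,…,k_N ∈ I∖{j}} p_{i k₁}(t) · p_{k₁ k₂}(α₁) ⋯ p_{k_{N-1} k_N}(α_{N-1}) · p_{k_N k}(α_N). -/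
/-!
Write `S_N = α₁ + ⋯ + α_N` and condition on the state occupied at time `t + S_N`:
by Chapman–Kolmogorov, `p_{ik}(t + S_{N+1}) = Σ_l p_{il}(t + S_N) p_{lk}(α_{N+1})`. The term
`l = j` is the new summand `n = N + 1`; for `l ≠ j` expand `p_{il}(t + S_N)` by induction, and
the terms through `j` recombine by Chapman–Kolmogorov again, because `p_{jj} = 0` lets the sum
over `l ≠ j` be extended to all `l`. All series are handled in `ℝ≥0∞`, where they may be
rearranged freely; finiteness of the left-hand side then makes the series over paths summable
in `ℝ`.
-/

/-- A positive matrix semigroup over an index set `I`: a family of nonnegative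
functions `p i j : (0,∞) → [0,∞)`, continuous on `(0,∞)`, satisfying the
Chapman–Kolmogorov equation (with convergent sums). -/
structure PosMatrixSemigroup (I : Type*) where
  p : I → I → ℝ → ℝ
  nonneg : ∀ i j t, 0 < t → 0 ≤ p i j t
  cont : ∀ i j, ContinuousOn (fun t => p i j t) (Set.Ioi (0 : ℝ))
  summable : ∀ i j t s, 0 < t → 0 < s → Summable (fun k => p i k t * p k j s)
  chapman : ∀ i j t s, 0 < t → 0 < s → p i j (t + s) = ∑' k, p i k t * p k j s

open Finset
open scoped ENNReal

theorem ENNReal.tsum_eq_add_tsum_ne {I : Type*} (f : I → ℝ≥0∞) (j : I) :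
    ∑' l, f l = f j + ∑' l : {l // l ≠ j}, f l := by
  rw [← ENNReal.summable.tsum_add_tsum_compl (s := {j}) ENNReal.summable, tsum_singleton]
  rfl

theorem ENNReal.eq_add_tsum_of_ofReal_eq {ι : Type*} {x a : ℝ} {b : ι → ℝ} (hx : 0 ≤ x)
    (ha : 0 ≤ a) (hb : ∀ i, 0 ≤ b i)
    (h : ENNReal.ofReal x = ENNReal.ofReal a + ∑' i, ENNReal.ofReal (b i)) :
    x = a + ∑' i, b i := by
  have hfin : ∑' i, ENNReal.ofReal (b i) ≠ ∞ :=
    ne_top_of_le_ne_top ENNReal.ofReal_ne_top (h ▸ le_add_self)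
  have := congrArg ENNReal.toReal h
  rwa [ENNReal.toReal_add ENNReal.ofReal_ne_top hfin, ENNReal.tsum_toReal_eq fun _ =>
    ENNReal.ofReal_ne_top, ENNReal.toReal_ofReal hx, ENNReal.toReal_ofReal ha,
    tsum_congr fun i => ENNReal.toReal_ofReal (hb i)] at this

section TabooDecomposition

variable {I : Type*}

def ChapmanKolmogorov (q : I → I → ℝ → ℝ≥0∞) : Prop :=
  ∀ i k t s, 0 < t → 0 < s → q i k (t + s) = ∑' l, q i l t * q l k s

/-- Chung's taboo weight: the total weight of the paths `i → k₁ → ⋯ → k_N → k` with all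
`kₙ ≠ j`, the steps taking times `t, α 1, …, α N`. -/
noncomputable def taboo (q : I → I → ℝ → ℝ≥0∞) (j : I) (t : ℝ) (α : ℕ → ℝ) :
    ℕ → I → I → ℝ≥0∞
  | 0, i, k => q i k t
  | n + 1, i, k => ∑' l : {l : I // l ≠ j}, taboo q j t α n i l * q l k (α (n + 1))

theorem taboo_succ_eq_tsum (q : I → I → ℝ → ℝ≥0∞) (j : I) (t : ℝ) (α : ℕ → ℝ) (M : ℕ)
    (i k : I) :
    taboo q j t α (M + 1) i k = ∑' f : Fin (M + 1) → {l : I // l ≠ j},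
      q i (f 0) t * (∏ m : Fin M, q (f m.castSucc) (f m.succ) (α (m + 1))) *
        q (f (Fin.last M)) k (α (M + 1)) := by
  induction M generalizing k with
  | zero =>
    rw [← (Equiv.funUnique (Fin 1) _).symm.tsum_eq]
    simp [taboo]
  | succ M ih =>
    simp only [taboo] at ih ⊢
    simp_rw [ih, ← ENNReal.tsum_mul_right]
    rw [← ENNReal.tsum_prod, ← (Fin.snocEquiv _).tsum_eq]
    refine tsum_congr fun ⟨l, f⟩ => ?_
    simp [Fin.prod_univ_castSucc, Fin.succ_castSucc, -Fin.castSucc_succ]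
    ring

variable {q : I → I → ℝ → ℝ≥0∞} {j : I}

theorem ChapmanKolmogorov.tsum_ne_mul (hq : ChapmanKolmogorov q)
    (hjj : ∀ s, 0 < s → q j j s = 0) (k : I) {s u : ℝ} (hs : 0 < s) (hu : 0 < u) :
    ∑' l : {l // l ≠ j}, q j l s * q l k u = q j k (s + u) := by
  rw [hq j k s u hs hu, ENNReal.tsum_eq_add_tsum_ne _ j, hjj s hs, zero_mul, zero_add]

theorem ChapmanKolmogorov.eq_sum_add_taboo (hq : ChapmanKolmogorov q)
    (hjj : ∀ s, 0 < s → q j j s = 0) {t : ℝ} (ht : 0 < t) {α : ℕ → ℝ} (hα : ∀ n, 0 < α n)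
    (N : ℕ) (i k : I) :
    q i k (t + ∑ n ∈ Icc 1 N, α n) =
      (∑ n ∈ Icc 1 N, q i j (t + ∑ m ∈ Icc 1 (n - 1), α m) * q j k (∑ m ∈ Icc n N, α m)) +
        taboo q j t α N i k := by
  induction N generalizing k with
  | zero => simp [taboo]
  | succ N ih =>
    have hS : 0 < t + ∑ n ∈ Icc 1 N, α n :=
      add_pos_of_pos_of_nonneg ht (sum_nonneg fun n _ => (hα n).le)
    have hrest : ∑' l : {l // l ≠ j}, q i l (t + ∑ n ∈ Icc 1 N, α n) * q l k (α (N + 1)) =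
        (∑ n ∈ Icc 1 N, q i j (t + ∑ m ∈ Icc 1 (n - 1), α m) * q j k (∑ m ∈ Icc n (N + 1), α m)) +
          taboo q j t α (N + 1) i k := by
      simp_rw [ih, add_mul, sum_mul, mul_assoc]
      rw [ENNReal.tsum_add, Summable.tsum_finsetSum fun _ _ => ENNReal.summable]
      congr 1
      refine sum_congr rfl fun n hn => ?_
      have hn := (mem_Icc.1 hn).2
      rw [ENNReal.tsum_mul_left, hq.tsum_ne_mul hjj k (sum_pos (fun m _ => hα m)
        (nonempty_Icc.2 hn)) (hα _), sum_Icc_succ_top (by omega)]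
    rw [sum_Icc_succ_top (by omega : 1 ≤ N + 1), ← add_assoc, hq i k _ _ hS (hα _),
      ENNReal.tsum_eq_add_tsum_ne _ j, hrest, sum_Icc_succ_top (by omega : 1 ≤ N + 1)]
    simp only [add_tsub_cancel_right, Icc_self, sum_singleton]
    ring

end TabooDecomposition

namespace PosMatrixSemigroup

variable {I : Type*} (P : PosMatrixSemigroup I)

theorem chapmanKolmogorov_ofReal :
    ChapmanKolmogorov fun i k t => ENNReal.ofReal (P.p i k t) := by
  intro i k t s ht hs
  dsimp only
  rw [P.chapman i k t s ht hs, ENNReal.ofReal_tsum_of_nonneg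
    (fun l => mul_nonneg (P.nonneg _ _ _ ht) (P.nonneg _ _ _ hs)) (P.summable i k t s ht hs)]
  exact tsum_congr fun l => ENNReal.ofReal_mul (P.nonneg _ _ _ ht)

end PosMatrixSemigroup

theorem stmt3 {I : Type*} (P : PosMatrixSemigroup I) (j : I)
    (hjj : ∀ t, 0 < t → P.p j j t = 0)
    (t : ℝ) (ht : 0 < t) (i k : I) (α : ℕ → ℝ) (hα : ∀ n, 0 < α n)
    (N : ℕ) (hN : 1 ≤ N) :
    P.p i k (t + ∑ n ∈ Finset.Icc 1 N, α n) =
      (∑ n ∈ Finset.Icc 1 N,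
        P.p i j (t + ∑ m ∈ Finset.Icc 1 (n - 1), α m) *
          P.p j k (∑ m ∈ Finset.Icc n N, α m)) +
      ∑' f : Fin N → {l : I // l ≠ j},
        P.p i (f ⟨0, hN⟩) t *
          (∏ m : Fin (N - 1),
            P.p (f ⟨m.val, by have := m.isLt; omega⟩)
              (f ⟨m.val + 1, by have := m.isLt; omega⟩) (α (m.val + 1))) *
          P.p (f ⟨N - 1, by omega⟩) k (α N) := by
  obtain ⟨M, rfl⟩ : ∃ M, N = M + 1 := ⟨N - 1, by omega⟩
  have key := P.chapmanKolmogorov_ofReal.eq_sum_add_taboo (j := j)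
    (fun s hs => by rw [hjj s hs, ENNReal.ofReal_zero]) ht hα (M + 1) i k
  rw [taboo_succ_eq_tsum] at key
  have hstart : ∀ s : Finset ℕ, 0 < t + ∑ m ∈ s, α m := fun s =>
    add_pos_of_pos_of_nonneg ht (sum_nonneg fun m _ => (hα m).le)
  have hrest : ∀ n ∈ Icc 1 (M + 1), 0 < ∑ m ∈ Icc n (M + 1), α m := fun n hn =>
    sum_pos (fun m _ => hα m) (nonempty_Icc.2 (mem_Icc.1 hn).2)
  have hpath : ∀ f : Fin (M + 1) → {l : I // l ≠ j},
      0 ≤ ∏ m : Fin M, P.p (f m.castSucc) (f m.succ) (α (m + 1)) :=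
    fun f => prod_nonneg fun m _ => P.nonneg _ _ _ (hα _)
  refine ENNReal.eq_add_tsum_of_ofReal_eq (P.nonneg _ _ _ (hstart _))
    (sum_nonneg fun n hn => mul_nonneg (P.nonneg _ _ _ (hstart _)) (P.nonneg _ _ _ (hrest n hn)))
    (fun f => mul_nonneg (mul_nonneg (P.nonneg _ _ _ ht) (hpath f)) (P.nonneg _ _ _ (hα _))) ?_
  convert key using 2
  · rw [ENNReal.ofReal_sum_of_nonneg fun n hn =>
      mul_nonneg (P.nonneg _ _ _ (hstart _)) (P.nonneg _ _ _ (hrest n hn))]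
    exact sum_congr rfl fun n _ => ENNReal.ofReal_mul (P.nonneg _ _ _ (hstart _))
  · refine tsum_congr fun f => ?_
    refine (ENNReal.ofReal_mul (mul_nonneg (P.nonneg _ _ _ ht) (hpath f))).trans ?_
    rw [ENNReal.ofReal_mul (P.nonneg _ _ _ ht),
      ENNReal.ofReal_prod_of_nonneg fun m _ => P.nonneg _ _ _ (hα _)]
    -- `⟨0, hN⟩` and `⟨M + 1 - 1, _⟩` are `0` and `Fin.last M` up to reduction
    rfl
end

section
/- Let p be a positive matrix semigroup over a countable index set I, let j ∈ I satisfy p_{jj}(t) = 0 for all t > 0, and suppose there exist i ∈ I and t₁ > 0 with p_{ij}(t₁) > 0. Then p_{jk}(t) = 0 for all k ∈ I and all t > 0. -/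
/-!
Since `p j j` vanishes, a path cannot visit `j` twice, so the passages through `j` at distinct
times `u₁ < ⋯ < uₙ` are disjoint events: `∑ᵣ p i j uᵣ * p j k (T - uᵣ) ≤ p i k T`. Hence
`u ↦ p i j u * p j k (T - u)` is summable over `(0, T)`, which forces it to be small off a finite
set. But if `p j k t > 0` then, for `T = t₁ + t`, it is positive at `t₁`, so by continuity it is
bounded below on a whole neighbourhood of `t₁`, which is infinite.
-/

open Filter Topology

namespace PosMatrixSemigroup

variable {I : Type*} (P : PosMatrixSemigroup I)

lemma hasSum {i j : I} {t s : ℝ} (ht : 0 < t) (hs : 0 < s) :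
    HasSum (fun k => P.p i k t * P.p k j s) (P.p i j (t + s)) := by
  rw [P.chapman i j t s ht hs]
  exact (P.summable i j t s ht hs).hasSum

lemma continuousAt {i j : I} {t : ℝ} (ht : 0 < t) : ContinuousAt (P.p i j) t :=
  (P.cont i j).continuousAt (Ioi_mem_nhds ht)

variable {j : I} (hjj : ∀ t, 0 < t → P.p j j t = 0)
include hjj

/-- Induction on the last passage time `v`: conditioning on the state at time `v`, the earlier
passages `u < v` never sit at `j` at time `v`, since `p j j (v - u) = 0`. -/
lemma sum_mul_le_of_p_self_eq_zero (a b : I) (s : Finset ℝ) {T : ℝ} (hT : 0 < T)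
    (hs : ∀ u ∈ s, u ∈ Set.Ioo 0 T) :
    ∑ u ∈ s, P.p a j u * P.p j b (T - u) ≤ P.p a b T := by
  classical
  induction s using Finset.induction_on_max generalizing b T with
  | empty => simpa using P.nonneg a b T hT
  | insert v s hlt ih =>
    obtain ⟨hv, hvT⟩ := hs v (Finset.mem_insert_self v s)
    have hs' : ∀ u ∈ s, u ∈ Set.Ioo 0 v :=
      fun u hu => ⟨(hs u (Finset.mem_insert_of_mem hu)).1, hlt u hu⟩
    let f : I → ℝ := fun m =>
      (if m = j then P.p a j v else 0) + ∑ u ∈ s, P.p a j u * P.p j m (v - u)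
    have hf : ∀ m, f m ≤ P.p a m v := by
      intro m
      by_cases hm : m = j
      · subst hm
        have : ∀ u ∈ s, P.p a m u * P.p m m (v - u) = 0 := fun u hu => by
          rw [hjj _ (sub_pos.2 (hlt u hu)), mul_zero]
        simp [f, Finset.sum_eq_zero this]
      · simpa [f, hm] using ih m hv hs'
    have hf_sum : HasSum (fun m => f m * P.p m b (T - v))
        (P.p a j v * P.p j b (T - v) + ∑ u ∈ s, P.p a j u * P.p j b (T - u)) := by
      have h := (hasSum_ite_eq j (P.p a j v * P.p j b (T - v))).add
        (hasSum_sum fun u hu =>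
          (P.hasSum (i := j) (j := b) (sub_pos.2 (hlt u hu)) (sub_pos.2 hvT)).mul_left (P.p a j u))
      convert h using 1
      · ext m
        simp only [f, add_mul, Finset.sum_mul, ite_mul, zero_mul, mul_assoc]
        split_ifs with hm <;> simp [hm]
      · simp only [sub_add_sub_cancel']
    rw [Finset.sum_insert fun hv' => lt_irrefl v (hlt v hv')]
    calc _ ≤ P.p a b (v + (T - v)) :=
          hasSum_le (fun m => mul_le_mul_of_nonneg_right (hf m) (P.nonneg m b _ (sub_pos.2 hvT)))
            hf_sum (P.hasSum hv (sub_pos.2 hvT))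
      _ = P.p a b T := by rw [add_sub_cancel]

lemma summable_indicator_mul_of_p_self_eq_zero (a b : I) {T : ℝ} (hT : 0 < T) :
    Summable ((Set.Ioo 0 T).indicator fun u => P.p a j u * P.p j b (T - u)) := by
  classical
  refine summable_of_sum_le (c := P.p a b T) (Set.indicator_nonneg fun u hu => ?_) fun s => ?_
  · exact mul_nonneg (P.nonneg a j u hu.1) (P.nonneg j b _ (sub_pos.2 hu.2))
  · rw [Finset.sum_indicator_eq_sum_filter]
    exact P.sum_mul_le_of_p_self_eq_zero hjj a b _ hT fun u hu => (Finset.mem_filter.1 hu).2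

end PosMatrixSemigroup

theorem stmt4_general {I : Type*} (P : PosMatrixSemigroup I) (j : I)
    (hjj : ∀ t, 0 < t → P.p j j t = 0)
    (i : I) (t₁ : ℝ) (ht₁ : 0 < t₁) (hij : 0 < P.p i j t₁) :
    ∀ (k : I) (t : ℝ), 0 < t → P.p j k t = 0 := by
  intro k t ht
  by_contra hjk
  set T := t₁ + t
  set φ : ℝ → ℝ := fun u => P.p i j u * P.p j k (T - u)
  have hφ_pos : 0 < φ t₁ := by
    simpa [φ, T] using mul_pos hij ((P.nonneg j k t ht).lt_of_ne' hjk)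
  have hφ_cont : ContinuousAt φ t₁ :=
    (P.continuousAt ht₁).mul <| (P.continuousAt (by simpa [T] using ht)).comp
      (continuousAt_const.sub continuousAt_id)
  have h_small : {u | φ t₁ / 2 ≤ (Set.Ioo 0 T).indicator φ u}.Finite := by
    simpa using eventually_cofinite.1 <|
      (P.summable_indicator_mul_of_p_self_eq_zero hjj i k (T := T) (by positivity)
        ).tendsto_cofinite_zero.eventually (gt_mem_nhds (half_pos hφ_pos))
  have h_large : {u | φ t₁ / 2 ≤ (Set.Ioo 0 T).indicator φ u} ∈ 𝓝 t₁ := by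
    filter_upwards [Ioo_mem_nhds ht₁ (by simp [T, ht] : t₁ < T),
      hφ_cont.eventually (eventually_ge_nhds (half_lt_self hφ_pos))] with u hu hφu
    rwa [Set.indicator_of_mem hu]
  exact infinite_of_mem_nhds t₁ h_large h_small

theorem stmt4 {I : Type*} [Countable I] (P : PosMatrixSemigroup I) (j : I)
    (hjj : ∀ t, 0 < t → P.p j j t = 0)
    (i : I) (t₁ : ℝ) (ht₁ : 0 < t₁) (hij : 0 < P.p i j t₁) :
    ∀ (k : I) (t : ℝ), 0 < t → P.p j k t = 0 :=
  stmt4_general P j hjj i t₁ ht₁ hij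
end

section
/- Let E be a sequence space (a sublattice of the space ℓ⁰ of all real sequences containing all unit vectors eⁱ), and let (T_t)_{t>0} be a positive one-parameter semigroup of sequentially order continuous linear operators on E such that t ↦ (T_t eⁱ)_j is continuous on (0,∞) for all i, j ∈ ℕ. Then the family p_{ij}(t) := (T_t eⁱ)_j satisfies the Chapman–Kolmogorov equation: (T_{t+s} eⁱ)_j = Σ_{k∈ℕ} (T_t eⁱ)_k · (T_s eᵏ)_j for all t, s > 0 and i, j ∈ ℕ. -/
/-! The partial sums `∑_{k<n} yₖ eᵏ` of any `y ∈ E` order converge to `y` (they are dominated by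
`|y| ∈ E`), so a sequentially order continuous `T` satisfies `(T y)ⱼ = lim_n ∑_{k<n} yₖ (T eᵏ)ⱼ`.
For a positive `T` and `y ≥ 0` the terms are nonnegative, so this limit is an unconditional sum.
Taking `y = T_t eⁱ` and using `T_{t+s} = T_s T_t` gives the Chapman–Kolmogorov equation. -/

/-- A sequence space: a sublattice of the vector lattice `ℓ⁰ = ℕ → ℝ` of all real
sequences (with componentwise order) containing all unit vectors. -/
structure SequenceSpace where
  carrier : Submodule ℝ (ℕ → ℝ)
  sup_mem : ∀ x y : ℕ → ℝ, x ∈ carrier → y ∈ carrier → x ⊔ y ∈ carrier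
  single_mem : ∀ i : ℕ, (Pi.single i 1 : ℕ → ℝ) ∈ carrier

/-- The `i`-th unit vector as an element of a sequence space. -/
def SequenceSpace.unitVec (E : SequenceSpace) (i : ℕ) : E.carrier :=
  ⟨Pi.single i 1, E.single_mem i⟩

/-- Order convergence of a sequence in a sequence space: order boundedness plus
componentwise convergence. -/
def OrderConv (E : SequenceSpace) (x : ℕ → E.carrier) (l : E.carrier) : Prop :=
  (∃ b : E.carrier, ∀ k n, |(x k : ℕ → ℝ) n| ≤ (b : ℕ → ℝ) n) ∧
    ∀ n, Filter.Tendsto (fun k => (x k : ℕ → ℝ) n) Filter.atTop (nhds ((l : ℕ → ℝ) n))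

/-- A sequentially order continuous operator maps order convergent sequences to
order convergent sequences. -/
def SeqOrderCont (E : SequenceSpace) (T : E.carrier →ₗ[ℝ] E.carrier) : Prop :=
  ∀ x l, OrderConv E x l → OrderConv E (fun k => T (x k)) (T l)

/-- A positive operator on a sequence space. -/
def PositiveOp (E : SequenceSpace) (T : E.carrier →ₗ[ℝ] E.carrier) : Prop :=
  ∀ x : E.carrier, (∀ n, 0 ≤ (x : ℕ → ℝ) n) → ∀ n, 0 ≤ (T x : ℕ → ℝ) n

open Finset Filter

namespace SequenceSpace

variable (E : SequenceSpace)

lemma unitVec_apply_nonneg (i n : ℕ) : 0 ≤ (E.unitVec i : ℕ → ℝ) n := by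
  simp only [unitVec, Pi.single_apply]
  split_ifs <;> norm_num

def absVec (y : E.carrier) : E.carrier :=
  ⟨(y : ℕ → ℝ) ⊔ -(y : ℕ → ℝ), E.sup_mem _ _ y.2 (E.carrier.neg_mem y.2)⟩

lemma coe_absVec (y : E.carrier) : (E.absVec y : ℕ → ℝ) = |(y : ℕ → ℝ)| := rfl

def partialSum (y : E.carrier) (n : ℕ) : E.carrier :=
  ∑ k ∈ range n, (y : ℕ → ℝ) k • E.unitVec k

lemma partialSum_apply (y : E.carrier) (n m : ℕ) :
    (E.partialSum y n : ℕ → ℝ) m = if m < n then (y : ℕ → ℝ) m else 0 := by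
  simp [partialSum, unitVec, Pi.single_apply]

lemma orderConv_partialSum (y : E.carrier) : OrderConv E (E.partialSum y) y := by
  refine ⟨⟨E.absVec y, fun n m => ?_⟩, fun m => ?_⟩
  · rw [partialSum_apply, coe_absVec, Pi.abs_apply]
    split_ifs <;> simp
  · refine tendsto_const_nhds.congr' ?_
    filter_upwards [eventually_gt_atTop m] with n hn
    rw [partialSum_apply, if_pos hn]

lemma map_partialSum_apply (T : E.carrier →ₗ[ℝ] E.carrier) (y : E.carrier) (n j : ℕ) :
    (T (E.partialSum y n) : ℕ → ℝ) j =
      ∑ k ∈ range n, (y : ℕ → ℝ) k * (T (E.unitVec k) : ℕ → ℝ) j := by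
  simp [partialSum, map_sum, map_smul]

lemma hasSum_apply_unitVec {T : E.carrier →ₗ[ℝ] E.carrier} (hpos : PositiveOp E T)
    (hoc : SeqOrderCont E T) {y : E.carrier} (hy : ∀ n, 0 ≤ (y : ℕ → ℝ) n) (j : ℕ) :
    HasSum (fun k => (y : ℕ → ℝ) k * (T (E.unitVec k) : ℕ → ℝ) j) ((T y : ℕ → ℝ) j) := by
  have hterm : ∀ k, 0 ≤ (y : ℕ → ℝ) k * (T (E.unitVec k) : ℕ → ℝ) j := fun k =>
    mul_nonneg (hy k) (hpos _ (E.unitVec_apply_nonneg k) j)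
  refine (hasSum_iff_tendsto_nat_of_nonneg hterm _).2 ?_
  simpa only [map_partialSum_apply] using (hoc _ _ (E.orderConv_partialSum y)).2 j

end SequenceSpace

theorem stmt9_general (E : SequenceSpace) (T : ℝ → (E.carrier →ₗ[ℝ] E.carrier))
    (hsg : ∀ t s : ℝ, 0 < t → 0 < s → T (t + s) = (T t).comp (T s))
    (hpos : ∀ t : ℝ, 0 < t → PositiveOp E (T t))
    (hoc : ∀ t : ℝ, 0 < t → SeqOrderCont E (T t)) :
    ∀ t s : ℝ, 0 < t → 0 < s → ∀ i j : ℕ,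
      (T (t + s) (E.unitVec i) : ℕ → ℝ) j =
        ∑' k : ℕ, (T t (E.unitVec i) : ℕ → ℝ) k * (T s (E.unitVec k) : ℕ → ℝ) j := by
  intro t s ht hs i j
  have hy : ∀ n, 0 ≤ (T t (E.unitVec i) : ℕ → ℝ) n := hpos t ht _ (E.unitVec_apply_nonneg i)
  rw [(E.hasSum_apply_unitVec (hpos s hs) (hoc s hs) hy j).tsum_eq, add_comm, hsg s t hs ht,
    LinearMap.comp_apply]

theorem stmt9 (E : SequenceSpace) (T : ℝ → (E.carrier →ₗ[ℝ] E.carrier))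
    (hsg : ∀ t s : ℝ, 0 < t → 0 < s → T (t + s) = (T t).comp (T s))
    (hpos : ∀ t : ℝ, 0 < t → PositiveOp E (T t))
    (hoc : ∀ t : ℝ, 0 < t → SeqOrderCont E (T t))
    (hcont : ∀ i j : ℕ,
      ContinuousOn (fun t : ℝ => (T t (E.unitVec i) : ℕ → ℝ) j) (Set.Ioi 0)) :
    ∀ t s : ℝ, 0 < t → 0 < s → ∀ i j : ℕ,
      (T (t + s) (E.unitVec i) : ℕ → ℝ) j =
        ∑' k : ℕ, (T t (E.unitVec i) : ℕ → ℝ) k * (T s (E.unitVec k) : ℕ → ℝ) j :=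
  stmt9_general E T hsg hpos hoc
end

section
/- Let p be a positive matrix semigroup over ℕ and define E := { x ∈ ℓ⁰ : Σ_n |x_n| p_{nm}(t) < ∞ for all t > 0 and all m ∈ ℕ }. Then E is a sublattice (indeed an ideal) of ℓ⁰ containing all unit vectors, the maps T_t x := ( Σ_n x_n p_{nm}(t) )_m are well-defined linear operators from E to E, and (T_t)_{t>0} is a positive one-parameter semigroup of sequentially order continuous operators on E with (T_t eⁿ)_m = p_{nm}(t). -/
/-!
The whole argument rests on the nonnegative double series
`∑ₙ ∑ₘ |xₙ| pₙₘ(t) pₘⱼ(s)`, whose iterated sum is `∑ₙ |xₙ| pₙⱼ(t + s) < ∞` by Chapman–Kolmogorov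
when `x ∈ E`. Its summability lets us swap the two sums, which gives both `T_t E ⊆ E`
(via `|T_t x| ≤ T_t |x|`) and the semigroup law `T_{t+s} = T_s T_t`. Sequential order
continuity is dominated convergence for series, with the dominating sequence in `E`.
-/

open Filter Topology

namespace PosMatrixSemigroup

variable {I : Type*} (P : PosMatrixSemigroup I)

def E : Submodule ℝ (I → ℝ) where
  carrier := {x | ∀ t, 0 < t → ∀ m, Summable fun n => |x n| * P.p n m t}
  zero_mem' := by simp
  add_mem' {x y} hx hy t ht m := by
    refine ((hx t ht m).add (hy t ht m)).of_nonneg_of_le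
      (fun n => mul_nonneg (abs_nonneg _) (P.nonneg _ _ _ ht)) fun n => ?_
    rw [← add_mul]
    exact mul_le_mul_of_nonneg_right (abs_add_le _ _) (P.nonneg _ _ _ ht)
  smul_mem' c x hx t ht m := by
    simpa only [Pi.smul_apply, smul_eq_mul, abs_mul, mul_assoc] using (hx t ht m).mul_left |c|

noncomputable def T (t : ℝ) (x : I → ℝ) : I → ℝ := fun m => ∑' n, x n * P.p n m t

variable {P}

theorem mem_E_of_abs_le {x y : I → ℝ} (hx : x ∈ P.E) (hyx : ∀ n, |y n| ≤ |x n|) :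
    y ∈ P.E := fun t ht m =>
  (hx t ht m).of_nonneg_of_le (fun _ => mul_nonneg (abs_nonneg _) (P.nonneg _ _ _ ht))
    fun n => mul_le_mul_of_nonneg_right (hyx n) (P.nonneg _ _ _ ht)

theorem abs_mem_E {x : I → ℝ} (hx : x ∈ P.E) : |x| ∈ P.E :=
  mem_E_of_abs_le hx fun _ => by simp

theorem single_mem_E [DecidableEq I] (n : I) : (Pi.single n 1 : I → ℝ) ∈ P.E := by
  intro t ht m
  refine summable_of_ne_finset_zero (s := {n}) fun k hk => ?_
  rw [Finset.mem_singleton] at hk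
  simp [Pi.single_eq_of_ne hk]

theorem summable_mul_of_mem_E {x : I → ℝ} (hx : x ∈ P.E) {t : ℝ} (ht : 0 < t) (m : I) :
    Summable fun n => x n * P.p n m t :=
  .of_abs <| by simpa only [abs_mul, abs_of_nonneg (P.nonneg _ _ _ ht)] using hx t ht m

theorem summable_chapmanKolmogorov {x : I → ℝ} (hx : x ∈ P.E) {t s : ℝ} (ht : 0 < t)
    (hs : 0 < s) (j : I) :
    Summable fun q : I × I => x q.1 * P.p q.1 q.2 t * P.p q.2 j s := by
  refine .of_abs ?_
  simp only [abs_mul, abs_of_nonneg (P.nonneg _ _ _ ht), abs_of_nonneg (P.nonneg _ _ _ hs)]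
  refine (summable_prod_of_nonneg fun q => ?_).mpr ⟨fun n => ?_, ?_⟩
  · exact mul_nonneg (mul_nonneg (abs_nonneg _) (P.nonneg _ _ _ ht)) (P.nonneg _ _ _ hs)
  · simpa only [mul_assoc] using (P.summable n j t s ht hs).mul_left |x n|
  · have hfiber : ∀ n, ∑' m, |x n| * P.p n m t * P.p m j s = |x n| * P.p n j (t + s) := by
      intro n
      simp only [P.chapman n j t s ht hs, mul_assoc, tsum_mul_left]
    simpa only [hfiber] using hx (t + s) (add_pos ht hs) j

theorem abs_T_le_of_abs_le {y b : I → ℝ} (hb : b ∈ P.E) (hyb : ∀ n, |y n| ≤ b n)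
    {t : ℝ} (ht : 0 < t) (m : I) : |P.T t y m| ≤ P.T t b m := by
  have hb_abs : ∀ n, |b n| = b n := fun n => abs_of_nonneg ((abs_nonneg _).trans (hyb n))
  have hy : y ∈ P.E := mem_E_of_abs_le hb fun n => (hyb n).trans_eq (hb_abs n).symm
  have hb' : Summable fun n => b n * P.p n m t := by simpa only [hb_abs] using hb t ht m
  calc |P.T t y m| ≤ ∑' n, ‖y n * P.p n m t‖ :=
        norm_tsum_le_tsum_norm (summable_mul_of_mem_E hy ht m).norm
    _ = ∑' n, |y n| * P.p n m t := by
        simp only [Real.norm_eq_abs, abs_mul, abs_of_nonneg (P.nonneg _ _ _ ht)]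
    _ ≤ P.T t b m :=
        (hy t ht m).tsum_le_tsum (fun n => mul_le_mul_of_nonneg_right (hyb n)
          (P.nonneg _ _ _ ht)) hb'

theorem T_mem {x : I → ℝ} (hx : x ∈ P.E) {t : ℝ} (ht : 0 < t) : P.T t x ∈ P.E := by
  intro s hs j
  have hdom : Summable fun m => P.T t |x| m * P.p m j s := by
    simpa only [T, Prod.fst_swap, Prod.snd_swap, Pi.abs_apply, tsum_mul_right] using
      (summable_chapmanKolmogorov (abs_mem_E hx) ht hs j).prod_symm.prod
  refine hdom.of_nonneg_of_le (fun m => mul_nonneg (abs_nonneg _) (P.nonneg _ _ _ hs))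
    fun m => mul_le_mul_of_nonneg_right ?_ (P.nonneg _ _ _ hs)
  exact abs_T_le_of_abs_le (abs_mem_E hx) (fun n => le_rfl) ht m

theorem T_add {x y : I → ℝ} (hx : x ∈ P.E) (hy : y ∈ P.E) {t : ℝ} (ht : 0 < t) :
    P.T t (x + y) = P.T t x + P.T t y := by
  funext m
  simp only [T, Pi.add_apply, add_mul]
  exact (summable_mul_of_mem_E hx ht m).tsum_add (summable_mul_of_mem_E hy ht m)

theorem T_smul (t c : ℝ) (x : I → ℝ) : P.T t (c • x) = c • P.T t x := by
  funext m
  simp only [T, Pi.smul_apply, smul_eq_mul, mul_assoc, tsum_mul_left]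

theorem T_add_time {x : I → ℝ} (hx : x ∈ P.E) {t s : ℝ} (ht : 0 < t) (hs : 0 < s) :
    P.T (t + s) x = P.T s (P.T t x) := by
  funext j
  calc P.T (t + s) x j = ∑' n, ∑' m, x n * P.p n m t * P.p m j s := by
        simp only [T, P.chapman _ j t s ht hs, mul_assoc, tsum_mul_left]
    _ = ∑' m, ∑' n, x n * P.p n m t * P.p m j s :=
        ((summable_chapmanKolmogorov hx ht hs j).tsum_comm).symm
    _ = P.T s (P.T t x) j := by simp only [T, tsum_mul_right]

theorem T_nonneg {x : I → ℝ} (hx : ∀ n, 0 ≤ x n) {t : ℝ} (ht : 0 < t) (m : I) :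
    0 ≤ P.T t x m :=
  tsum_nonneg fun n => mul_nonneg (hx n) (P.nonneg _ _ _ ht)

theorem T_single [DecidableEq I] (t : ℝ) (n m : I) : P.T t (Pi.single n 1) m = P.p n m t := by
  rw [T, tsum_eq_single n fun k hk => by simp [Pi.single_eq_of_ne hk]]
  simp

theorem tendsto_T_of_dominated {α : Type*} {l : Filter α} {xk : α → I → ℝ} {x b : I → ℝ}
    (hb : b ∈ P.E) (hbound : ∀ k n, |xk k n| ≤ b n)
    (hlim : ∀ n, Tendsto (fun k => xk k n) l (𝓝 (x n))) {t : ℝ} (ht : 0 < t) (m : I) :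
    Tendsto (fun k => P.T t (xk k) m) l (𝓝 (P.T t x m)) := by
  refine tendsto_tsum_of_dominated_convergence (hb t ht m) (fun n => (hlim n).mul_const _) ?_
  refine .of_forall fun k n => ?_
  rw [Real.norm_eq_abs, abs_mul, abs_of_nonneg (P.nonneg _ _ _ ht)]
  exact mul_le_mul_of_nonneg_right ((hbound k n).trans (le_abs_self _)) (P.nonneg _ _ _ ht)

end PosMatrixSemigroup

open PosMatrixSemigroup

theorem stmt11 (P : PosMatrixSemigroup ℕ)
    (Eset : Set (ℕ → ℝ))
    (hE : Eset = {x : ℕ → ℝ | ∀ t, 0 < t → ∀ m, Summable fun n => |x n| * P.p n m t})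
    (Tmap : ℝ → (ℕ → ℝ) → (ℕ → ℝ))
    (hT : Tmap = fun t x m => ∑' n, x n * P.p n m t) :
    -- E is a linear subspace of ℓ⁰ …
    (∀ x y, x ∈ Eset → y ∈ Eset → x + y ∈ Eset) ∧
    (∀ (c : ℝ) (x), x ∈ Eset → c • x ∈ Eset) ∧
    -- … which is an ideal (hence a sublattice) …
    (∀ x y, x ∈ Eset → (∀ n, |y n| ≤ |x n|) → y ∈ Eset) ∧
    -- … containing all unit vectors,
    (∀ n : ℕ, (Pi.single n 1 : ℕ → ℝ) ∈ Eset) ∧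
    -- each T_t is a well-defined linear operator from E to E,
    (∀ t, 0 < t → ∀ x, x ∈ Eset → Tmap t x ∈ Eset) ∧
    (∀ t, 0 < t → ∀ x y, x ∈ Eset → y ∈ Eset → Tmap t (x + y) = Tmap t x + Tmap t y) ∧
    (∀ t, 0 < t → ∀ (c : ℝ) (x), x ∈ Eset → Tmap t (c • x) = c • Tmap t x) ∧
    -- (T_t) is a one-parameter semigroup,
    (∀ t s, 0 < t → 0 < s → ∀ x, x ∈ Eset → Tmap (t + s) x = Tmap s (Tmap t x)) ∧
    -- each T_t is positive,
    (∀ t, 0 < t → ∀ x, x ∈ Eset → (∀ n, 0 ≤ x n) → ∀ m, 0 ≤ Tmap t x m) ∧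
    -- each T_t is sequentially order continuous,
    (∀ t, 0 < t → ∀ (xk : ℕ → ℕ → ℝ) (x : ℕ → ℝ), (∀ k, xk k ∈ Eset) → x ∈ Eset →
      (∃ b ∈ Eset, ∀ k n, |xk k n| ≤ b n) →
      (∀ n, Filter.Tendsto (fun k => xk k n) Filter.atTop (nhds (x n))) →
      (∃ b ∈ Eset, ∀ k n, |Tmap t (xk k) n| ≤ b n) ∧
        (∀ n, Filter.Tendsto (fun k => Tmap t (xk k) n) Filter.atTop (nhds (Tmap t x n)))) ∧
    -- and (T_t e^n)_m = p_{nm}(t).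
    (∀ t, 0 < t → ∀ n m : ℕ, Tmap t (Pi.single n 1) m = P.p n m t) := by
  obtain rfl : Eset = P.E := hE
  obtain rfl : Tmap = P.T := hT
  refine ⟨fun x y => P.E.add_mem, fun c x => P.E.smul_mem c, fun x y => mem_E_of_abs_le,
    single_mem_E, fun t ht x hx => T_mem hx ht, fun t ht x y hx hy => T_add hx hy ht,
    fun t _ c x _ => T_smul t c x, fun t s ht hs x hx => T_add_time hx ht hs,
    fun t ht x _ hx0 => T_nonneg hx0 ht, ?_, fun t _ => T_single t⟩
  rintro t ht xk x - - ⟨b, hb, hbound⟩ hlim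
  exact ⟨⟨P.T t b, T_mem hb ht, fun k => abs_T_le_of_abs_le hb (hbound k) ht⟩,
    tendsto_T_of_dominated hb hbound hlim ht⟩
end

section
/- Let (T_t)_{t>0} be a positive semigroup of bounded linear operators on ℓᵖ(ℝ) (1 ≤ p < ∞) such that t ↦ T_t f is continuous on (0,∞) for all f. Then for each f ∈ ℓᵖ(ℝ)₊ the set { r ∈ ℝ : (T_t f)(r) > 0 for some t > 0 } is at most countable. -/
/-! If `(T t f)(r) ≠ 0`, continuity of `t ↦ (T t f)(r)` gives a rational time `s` with
`(T s f)(r) ≠ 0`. So the set lies in the union of the supports of the `T s f`, `s ∈ ℚ`, each of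
which is countable because `p < ∞`. -/

open Set Function TopologicalSpace

theorem Memℓp.countable_dsupport {α : Type*} {E : α → Type*} [∀ i, NormedAddCommGroup (E i)]
    {p : ENNReal} (hp : p ≠ ⊤) {f : ∀ i, E i} (hf : Memℓp f p) :
    {i | f i ≠ 0}.Countable := by
  rcases eq_or_ne p 0 with rfl | hp0
  · exact hf.finite_dsupport.countable
  have hp' : 0 < p.toReal := ENNReal.toReal_pos hp0 hp
  refine (hf.summable hp').countable_support.mono fun i hi => ?_
  simpa [mem_support, Real.rpow_eq_zero (norm_nonneg _) hp'.ne'] using hi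

theorem countable_biUnion_support_of_continuousOn {X ι E : Type*} [TopologicalSpace X]
    [SeparableSpace X] [TopologicalSpace E] [T1Space E] [Zero E] {U : Set X} (hU : IsOpen U)
    {φ : X → ι → E} (hφ : ∀ i, ContinuousOn (fun x => φ x i) U)
    (hsupp : ∀ x ∈ U, (support (φ x)).Countable) :
    (⋃ x ∈ U, support (φ x)).Countable := by
  obtain ⟨D, hDc, hD⟩ := exists_countable_dense X
  refine ((hDc.mono inter_subset_left).biUnion fun x hx => hsupp x hx.2).mono ?_
  simp only [iUnion_subset_iff]
  intro x hx i hi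
  obtain ⟨y, hyD, hyU, hyi⟩ : ∃ y ∈ D, y ∈ U ∩ (fun x => φ x i) ⁻¹' {0}ᶜ :=
    hD.exists_mem_open ((hφ i).isOpen_inter_preimage hU isOpen_compl_singleton) ⟨x, hx, hi⟩
  exact mem_biUnion (show y ∈ D ∩ U from ⟨hyD, hyU⟩) hyi

theorem stmt12_general (q : ENNReal) [hq1 : Fact (1 ≤ q)] (hq2 : q ≠ ⊤)
    (T : ℝ → lp (fun _ : ℝ => ℝ) q →L[ℝ] lp (fun _ : ℝ => ℝ) q)
    (hcont : ∀ f : lp (fun _ : ℝ => ℝ) q,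
      ContinuousOn (fun t : ℝ => T t f) (Set.Ioi 0))
    (f : lp (fun _ : ℝ => ℝ) q) :
    {r : ℝ | ∃ t : ℝ, 0 < t ∧ 0 < (T t f) r}.Countable := by
  have hsupp := countable_biUnion_support_of_continuousOn isOpen_Ioi
    (φ := fun t => ⇑(T t f))
    (fun r => (lp.lipschitzWith_one_eval q r).continuous.comp_continuousOn (hcont f))
    (fun t _ => (T t f).prop.countable_dsupport hq2)
  refine hsupp.mono ?_
  rintro r ⟨t, ht, hr⟩
  exact mem_biUnion ht hr.ne'

theorem stmt12 (q : ENNReal) [hq1 : Fact (1 ≤ q)] (hq2 : q ≠ ⊤)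
    (T : ℝ → lp (fun _ : ℝ => ℝ) q →L[ℝ] lp (fun _ : ℝ => ℝ) q)
    (hsg : ∀ t s : ℝ, 0 < t → 0 < s → T (t + s) = (T t).comp (T s))
    (hpos : ∀ t : ℝ, 0 < t → ∀ f : lp (fun _ : ℝ => ℝ) q,
      (∀ r : ℝ, 0 ≤ f r) → ∀ r : ℝ, 0 ≤ (T t f) r)
    (hcont : ∀ f : lp (fun _ : ℝ => ℝ) q,
      ContinuousOn (fun t : ℝ => T t f) (Set.Ioi 0))
    (f : lp (fun _ : ℝ => ℝ) q) (hf : ∀ r : ℝ, 0 ≤ f r) :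
    {r : ℝ | ∃ t : ℝ, 0 < t ∧ 0 < (T t f) r}.Countable :=
  stmt12_general q (hq1 := hq1) hq2 T hcont f
end

section
/- Let E be a Banach lattice, (T_t)_{t>0} a positive semigroup on E, f ∈ E₊ with T_t f → f as t ↓ 0. Then there exists a sequence t_n ↓ 0 and an increasing sequence (f_n) in E converging to f such that 0 ≤ f_n ≤ T_{t_n} f for all n. -/
/-!
Choose times `t_n ↓ 0` with `‖T_{t_n} f - f‖ < 2⁻ⁿ`, so that the defects `h_n = (f - T_{t_n} f)⁺`
are summable. The tails `S_n = ∑_{k ≥ n} h_k` decrease to `0` and dominate `f - T_{t_n} f`, hence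
`f_n = (f - S_n)⁺` increases to `f⁺ = f` and satisfies `0 ≤ f_n ≤ T_{t_n} f`.
-/

open Filter Topology

theorem norm_posPart_le {E : Type*} [NormedAddCommGroup E] [Lattice E] [HasSolidNorm E]
    [IsOrderedAddMonoid E] (a : E) : ‖a⁺‖ ≤ ‖a‖ := by
  apply HasSolidNorm.solid
  rw [abs_of_nonneg (posPart_nonneg a), posPart_def]
  exact sup_le (le_abs_self a) (abs_nonneg a)

theorem exists_seq_strictAnti_tendsto_dist_lt {α X : Type*} [TopologicalSpace α] [LinearOrder α]
    [OrderTopology α] [DenselyOrdered α] [NoMaxOrder α] [FirstCountableTopology α]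
    [PseudoMetricSpace X] {u : α → X} {a : α} {x : X} (hu : Tendsto u (𝓝[>] a) (𝓝 x))
    {ε : ℕ → ℝ} (hε : ∀ n, 0 < ε n) :
    ∃ s : ℕ → α, StrictAnti s ∧ (∀ n, a < s n) ∧ Tendsto s atTop (𝓝 a) ∧
      ∀ n, dist (u (s n)) x < ε n := by
  obtain ⟨s, hs_anti, hs_gt, hs_lim⟩ := exists_seq_strictAnti_tendsto a
  have hs_within : Tendsto s atTop (𝓝[>] a) :=
    tendsto_nhdsWithin_of_tendsto_nhds_of_eventually_within _ hs_lim (Eventually.of_forall hs_gt)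
  obtain ⟨φ, hφ, hdist⟩ := extraction_forall_of_eventually fun n =>
    Metric.tendsto_nhds.1 (hu.comp hs_within) (ε n) (hε n)
  exact ⟨s ∘ φ, hs_anti.comp_strictMono hφ, fun n => hs_gt _, hs_lim.comp hφ.tendsto_atTop, hdist⟩

theorem exists_monotone_tendsto_le_of_summable_posPart_sub {E : Type*} [NormedAddCommGroup E]
    [Lattice E] [HasSolidNorm E] [IsOrderedAddMonoid E] {f : E} (hf : 0 ≤ f) {y : ℕ → E}
    (hy : ∀ n, 0 ≤ y n) (hsum : Summable fun n => (f - y n)⁺) :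
    ∃ g : ℕ → E, Monotone g ∧ Tendsto g atTop (𝓝 f) ∧ ∀ n, 0 ≤ g n ∧ g n ≤ y n := by
  set h : ℕ → E := fun n => (f - y n)⁺
  set tail : ℕ → E := fun n => ∑' k, h (k + n)
  have tail_succ (n : ℕ) : tail n = h n + tail (n + 1) := by
    simpa only [zero_add, add_assoc, add_comm 1 n] using
      ((summable_nat_add_iff n).2 hsum).tsum_eq_zero_add
  have tail_nonneg (n : ℕ) : 0 ≤ tail n := tsum_nonneg fun k => posPart_nonneg _
  have tail_anti : Antitone tail := antitone_nat_of_succ_le fun n => by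
    rw [tail_succ n]
    exact le_add_of_nonneg_left (posPart_nonneg _)
  have sub_le_tail (n : ℕ) : f - y n ≤ tail n := by
    rw [tail_succ n]
    exact (le_posPart _).trans (le_add_of_nonneg_right (tail_nonneg _))
  refine ⟨fun n => (f - tail n)⁺, fun m n hmn => posPart_mono (sub_le_sub_left (tail_anti hmn) f),
    ?_, fun n => ⟨posPart_nonneg _, sup_le (sub_le_comm.1 (sub_le_tail n)) (hy n)⟩⟩
  simpa [posPart_eq_self.2 hf, Function.comp_def, tail] using
    (continuous_posPart.tendsto (f - 0)).comp (tendsto_const_nhds.sub (tendsto_sum_nat_add h))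

theorem stmt14_general {E : Type*} [NormedAddCommGroup E] [Lattice E] [HasSolidNorm E]
    [IsOrderedAddMonoid E] [NormedSpace ℝ E] [CompleteSpace E]
    (T : ℝ → E →L[ℝ] E)
    (hpos : ∀ t : ℝ, 0 < t → ∀ x : E, 0 ≤ x → 0 ≤ T t x)
    (f : E) (hf : 0 ≤ f)
    (hconv : Filter.Tendsto (fun t : ℝ => T t f) (nhdsWithin 0 (Set.Ioi 0)) (nhds f)) :
    ∃ (ts : ℕ → ℝ) (g : ℕ → E),
      (∀ n, 0 < ts n) ∧ Antitone ts ∧ Filter.Tendsto ts Filter.atTop (nhds 0) ∧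
      Monotone g ∧ Filter.Tendsto g Filter.atTop (nhds f) ∧
      ∀ n, 0 ≤ g n ∧ g n ≤ T (ts n) f := by
  obtain ⟨ts, ts_anti, ts_pos, ts_lim, ts_dist⟩ :=
    exists_seq_strictAnti_tendsto_dist_lt hconv fun n => pow_pos (one_half_pos (α := ℝ)) n
  have hsum : Summable fun n => (f - T (ts n) f)⁺ :=
    Summable.of_norm_bounded summable_geometric_two fun n => calc
      ‖(f - T (ts n) f)⁺‖ ≤ ‖f - T (ts n) f‖ := norm_posPart_le _
      _ = dist (T (ts n) f) f := by rw [dist_eq_norm, norm_sub_rev]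
      _ ≤ (1 / 2) ^ n := (ts_dist n).le
  obtain ⟨g, g_mono, g_lim, g_bounds⟩ :=
    exists_monotone_tendsto_le_of_summable_posPart_sub hf (fun n => hpos _ (ts_pos n) f hf) hsum
  exact ⟨ts, g, ts_pos, ts_anti.antitone, ts_lim, g_mono, g_lim, g_bounds⟩

theorem stmt14 {E : Type*} [NormedAddCommGroup E] [Lattice E] [HasSolidNorm E]
    [IsOrderedAddMonoid E] [NormedSpace ℝ E] [CompleteSpace E]
    (T : ℝ → E →L[ℝ] E)
    (hsg : ∀ t s : ℝ, 0 < t → 0 < s → T (t + s) = (T t).comp (T s))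
    (hpos : ∀ t : ℝ, 0 < t → ∀ x : E, 0 ≤ x → 0 ≤ T t x)
    (f : E) (hf : 0 ≤ f)
    (hconv : Filter.Tendsto (fun t : ℝ => T t f) (nhdsWithin 0 (Set.Ioi 0)) (nhds f)) :
    ∃ (ts : ℕ → ℝ) (g : ℕ → E),
      (∀ n, 0 < ts n) ∧ Antitone ts ∧ Filter.Tendsto ts Filter.atTop (nhds 0) ∧
      Monotone g ∧ Filter.Tendsto g Filter.atTop (nhds f) ∧
      ∀ n, 0 ≤ g n ∧ g n ≤ T (ts n) f :=
  stmt14_general T hpos f hf hconv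
end
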